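/- Let E be a normed space, 1 ≤ p ≤ q < ∞, and let f : E → E be Hölder continuous on bounded subsets of E with exponent p/q. Then the composition operator C_f : BV_p([a,b],E) → BV_q([a,b],E) is locally bounded; in fact, for every r > 0 and every x with ‖x‖_p ≤ r, one has ‖C_f(x)‖_q ≤ ‖f(0)‖ + 2 L_r r^{p/q}, where L_r is the Hölder constant of f on the closed ball of radius r. -/

import Mathlib

open scoped ENNReal NNReal

noncomputable def pVar {E : Type*} [NormedAddCommGroup E] (p a b : ℝ) (x : ℝ → E) : ℝ≥0∞ :=
  ⨆ (n : ℕ) (t : Fin (n + 1) → ℝ) (_ : StrictMono t) (_ : t 0 = a)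
    (_ : t (Fin.last n) = b),
    ∑ i : Fin n, (‖x (t i.succ) - x (t i.castSucc)‖₊ : ℝ≥0∞) ^ p

/-! Each increment of `x` is controlled by `‖x‖_p`, so `x` maps `[a, b]` into the ball of radius
`r`. On that ball `‖f u - f w‖ ^ q ≤ L ^ q ‖u - w‖ ^ p`, which gives
`var_q (f ∘ x) ≤ L ^ q var_p x ≤ L ^ q r ^ p`; the value `f (x a)` is compared with `f 0`. -/

section PVariation

variable {E F : Type*} [NormedAddCommGroup E] [NormedAddCommGroup F]

lemma sum_le_pVar (p : ℝ) {a b : ℝ} (x : ℝ → E) {n : ℕ} {t : Fin (n + 1) → ℝ}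
    (ht : StrictMono t) (h0 : t 0 = a) (hn : t (Fin.last n) = b) :
    ∑ i : Fin n, (‖x (t i.succ) - x (t i.castSucc)‖₊ : ℝ≥0∞) ^ p ≤ pVar p a b x :=
  le_iSup_of_le n <| le_iSup_of_le t <| le_iSup_of_le ht <| le_iSup_of_le h0 <|
    le_iSup_of_le hn le_rfl

lemma coe_nnnorm_rpow (v : E) {p : ℝ} (hp : 0 ≤ p) :
    (‖v‖₊ : ℝ≥0∞) ^ p = ENNReal.ofReal (‖v‖ ^ p) := by
  rw [← ENNReal.ofReal_rpow_of_nonneg (norm_nonneg v) hp, ← coe_nnnorm,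
    ENNReal.ofReal_coe_nnreal]

lemma ofReal_norm_sub_rpow_le_pVar {p a b c : ℝ} (hp : 0 < p) (x : ℝ → E)
    (hac : a ≤ c) (hcb : c ≤ b) :
    ENNReal.ofReal (‖x c - x a‖ ^ p) ≤ pVar p a b x := by
  rw [← coe_nnnorm_rpow _ hp.le]
  rcases hac.eq_or_lt with rfl | hac
  · simp [ENNReal.zero_rpow_of_pos hp]
  rcases hcb.eq_or_lt with rfl | hcb
  · have ht : StrictMono ![a, c] := by
      intro i j hij
      fin_cases i <;> fin_cases j <;> simp_all
    simpa using sum_le_pVar p x ht rfl rfl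
  · have ht : StrictMono ![a, c, b] := by
      intro i j hij
      fin_cases i <;> fin_cases j <;> simp_all [hac.trans hcb]
    refine le_trans ?_ (sum_le_pVar p x ht rfl rfl)
    simp [Fin.sum_univ_succ]

lemma norm_sub_le_toReal_pVar_rpow {p a b c : ℝ} (hp : 0 < p) {x : ℝ → E}
    (hx : pVar p a b x ≠ ⊤) (hac : a ≤ c) (hcb : c ≤ b) :
    ‖x c - x a‖ ≤ (pVar p a b x).toReal ^ (1 / p) := by
  have hpow : ‖x c - x a‖ ^ p ≤ (pVar p a b x).toReal :=
    (ENNReal.ofReal_le_iff_le_toReal hx).mp (ofReal_norm_sub_rpow_le_pVar hp x hac hcb)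
  calc ‖x c - x a‖ = (‖x c - x a‖ ^ p) ^ (1 / p) := by
        rw [← Real.rpow_mul (norm_nonneg _), mul_one_div_cancel hp.ne', Real.rpow_one]
    _ ≤ (pVar p a b x).toReal ^ (1 / p) := by gcongr

lemma norm_le_of_pVar_ne_top {p a b c : ℝ} (hp : 0 < p) {x : ℝ → E}
    (hx : pVar p a b x ≠ ⊤) (hac : a ≤ c) (hcb : c ≤ b) :
    ‖x c‖ ≤ ‖x a‖ + (pVar p a b x).toReal ^ (1 / p) :=
  calc ‖x c‖ ≤ ‖x a‖ + ‖x c - x a‖ := norm_le_norm_add_norm_sub' _ _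
    _ ≤ ‖x a‖ + (pVar p a b x).toReal ^ (1 / p) := by
      gcongr; exact norm_sub_le_toReal_pVar_rpow hp hx hac hcb

lemma pVar_comp_le_of_holder {p q a b L : ℝ} (hp : 0 ≤ p) (hq : 0 < q) (hL : 0 ≤ L)
    {f : E → F} {s : Set E}
    (hf : ∀ u ∈ s, ∀ w ∈ s, ‖f u - f w‖ ≤ L * ‖u - w‖ ^ (p / q))
    {x : ℝ → E} (hxs : ∀ t ∈ Set.Icc a b, x t ∈ s) :
    pVar q a b (fun t => f (x t)) ≤ ENNReal.ofReal (L ^ q) * pVar p a b x := by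
  have hpow : ∀ u ∈ s, ∀ w ∈ s, ‖f u - f w‖ ^ q ≤ L ^ q * ‖u - w‖ ^ p := by
    intro u hu w hw
    calc ‖f u - f w‖ ^ q ≤ (L * ‖u - w‖ ^ (p / q)) ^ q := by gcongr; exact hf u hu w hw
      _ = L ^ q * ‖u - w‖ ^ p := by
        rw [Real.mul_rpow hL (by positivity), ← Real.rpow_mul (norm_nonneg _),
          div_mul_cancel₀ p hq.ne']
  refine iSup_le fun n => iSup_le fun t => iSup_le fun ht => iSup_le fun h0 =>
    iSup_le fun hn => ?_
  have hts : ∀ i, x (t i) ∈ s := fun i => hxs _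
    ⟨h0 ▸ ht.monotone (Fin.zero_le i), hn ▸ ht.monotone (Fin.le_last i)⟩
  calc ∑ i : Fin n, (‖f (x (t i.succ)) - f (x (t i.castSucc))‖₊ : ℝ≥0∞) ^ q
      ≤ ∑ i : Fin n,
          ENNReal.ofReal (L ^ q) * (‖x (t i.succ) - x (t i.castSucc)‖₊ : ℝ≥0∞) ^ p := by
        gcongr with i
        rw [coe_nnnorm_rpow _ hq.le, coe_nnnorm_rpow _ hp,
          ← ENNReal.ofReal_mul (by positivity)]
        exact ENNReal.ofReal_le_ofReal (hpow _ (hts _) _ (hts _))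
    _ ≤ ENNReal.ofReal (L ^ q) * pVar p a b x := by
        rw [← Finset.mul_sum]; gcongr; exact sum_le_pVar p x ht h0 hn

lemma toReal_pVar_comp_rpow_le_of_holder {p q a b L : ℝ} (hp : 0 ≤ p) (hq : 0 < q)
    (hL : 0 ≤ L) {f : E → F} {s : Set E}
    (hf : ∀ u ∈ s, ∀ w ∈ s, ‖f u - f w‖ ≤ L * ‖u - w‖ ^ (p / q))
    {x : ℝ → E} (hxs : ∀ t ∈ Set.Icc a b, x t ∈ s) (hx : pVar p a b x ≠ ⊤) :
    (pVar q a b (fun t => f (x t))).toReal ^ (1 / q) ≤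
      L * (pVar p a b x).toReal ^ (1 / q) := by
  have hvar : (pVar q a b (fun t => f (x t))).toReal ≤ L ^ q * (pVar p a b x).toReal := by
    simpa [ENNReal.toReal_mul, ENNReal.toReal_ofReal (Real.rpow_nonneg hL q)] using
      ENNReal.toReal_mono (ENNReal.mul_ne_top ENNReal.ofReal_ne_top hx)
        (pVar_comp_le_of_holder hp hq hL hf hxs)
  calc (pVar q a b (fun t => f (x t))).toReal ^ (1 / q)
      ≤ (L ^ q * (pVar p a b x).toReal) ^ (1 / q) := by gcongr
    _ = L * (pVar p a b x).toReal ^ (1 / q) := by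
        rw [Real.mul_rpow (by positivity) ENNReal.toReal_nonneg, ← Real.rpow_mul hL,
          mul_one_div_cancel hq.ne', Real.rpow_one]

end PVariation

theorem comp_locally_bounded_of_holder_general {E : Type*} [NormedAddCommGroup E]
    (p q a b : ℝ) (hp : 1 ≤ p) (hpq : p ≤ q)
    (f : E → E) (r : ℝ) (L : ℝ) (hL : 0 ≤ L)
    (hf : ∀ u ∈ Metric.closedBall (0 : E) r, ∀ w ∈ Metric.closedBall (0 : E) r,
      ‖f u - f w‖ ≤ L * ‖u - w‖ ^ (p / q))
    (x : ℝ → E) (hx : pVar p a b x ≠ ⊤)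
    (hxr : ‖x a‖ + (pVar p a b x).toReal ^ (1 / p) ≤ r) :
    ‖f (x a)‖ + (pVar q a b (fun t => f (x t))).toReal ^ (1 / q)
      ≤ ‖f 0‖ + 2 * L * r ^ (p / q) := by
  have hp0 : 0 < p := zero_lt_one.trans_le hp
  have hq0 : 0 < q := hp0.trans_le hpq
  have hVr : (pVar p a b x).toReal ^ (1 / p) ≤ r :=
    le_of_add_le_of_nonneg_right hxr (norm_nonneg _)
  have hr : 0 ≤ r := (by positivity : 0 ≤ ‖x a‖ + _).trans hxr
  have hxa : x a ∈ Metric.closedBall (0 : E) r := by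
    simpa using le_of_add_le_of_nonneg_left hxr (by positivity)
  have hxs : ∀ t ∈ Set.Icc a b, x t ∈ Metric.closedBall (0 : E) r := fun t ht => by
    simpa using (norm_le_of_pVar_ne_top hp0 hx ht.1 ht.2).trans hxr
  have hvar : (pVar q a b (fun t => f (x t))).toReal ^ (1 / q) ≤ L * r ^ (p / q) :=
    calc _ ≤ L * (pVar p a b x).toReal ^ (1 / q) :=
          toReal_pVar_comp_rpow_le_of_holder hp0.le hq0 hL hf hxs hx
      _ = L * ((pVar p a b x).toReal ^ (1 / p)) ^ (p / q) := by
        rw [← Real.rpow_mul ENNReal.toReal_nonneg]; field_simp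
      _ ≤ L * r ^ (p / q) := by gcongr
  have hfxa : ‖f (x a)‖ ≤ ‖f 0‖ + L * r ^ (p / q) :=
    calc ‖f (x a)‖ ≤ ‖f 0‖ + ‖f (x a) - f 0‖ := norm_le_norm_add_norm_sub' _ _
      _ ≤ ‖f 0‖ + L * ‖x a - 0‖ ^ (p / q) := by
        gcongr; exact hf _ hxa _ (Metric.mem_closedBall_self hr)
      _ ≤ ‖f 0‖ + L * r ^ (p / q) := by
        gcongr; simpa using hxa
  linarith

/-- If `f` is Hölder continuous with exponent `p/q` on bounded subsets of `E`, then the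
composition operator `C_f : BV_p([a,b],E) → BV_q([a,b],E)` is locally bounded; in fact
`‖C_f(x)‖_q ≤ ‖f 0‖ + 2 L_r r^(p/q)` whenever `‖x‖_p ≤ r`, where `L_r` is the Hölder
constant of `f` on the closed ball of radius `r`. -/
theorem comp_locally_bounded_of_holder {E : Type*} [NormedAddCommGroup E]
    (p q a b : ℝ) (hp : 1 ≤ p) (hpq : p ≤ q) (hab : a ≤ b)
    (f : E → E) (r : ℝ) (hr : 0 < r) (L : ℝ) (hL : 0 ≤ L)
    (hf : ∀ u ∈ Metric.closedBall (0 : E) r, ∀ w ∈ Metric.closedBall (0 : E) r,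
      ‖f u - f w‖ ≤ L * ‖u - w‖ ^ (p / q))
    (x : ℝ → E) (hx : pVar p a b x ≠ ⊤)
    (hxr : ‖x a‖ + (pVar p a b x).toReal ^ (1 / p) ≤ r) :
    ‖f (x a)‖ + (pVar q a b (fun t => f (x t))).toReal ^ (1 / q)
      ≤ ‖f 0‖ + 2 * L * r ^ (p / q) :=
  comp_locally_bounded_of_holder_general p q a b hp hpq f r L hL hf x hx hxr
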